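/- arXiv:1103.4335 — 2 statements merged into one kernel-verified Lean document; each statement's English description precedes it below -/
import Mathlib

section
/- Let K be a perfect field, s ∈ {1, 2}, and α, ν real numbers with α ∉ {0, 1}. For every integer j ≥ 1 let X^{(j)} be a curve of genus g^{(j)} over K and a^{(j)} ∈ Z an integer. Suppose that, as j → ∞, g^{(j)} → ∞, a^{(j)}/g^{(j)} → α, and liminf |X^{(j)}(K)|/g^{(j)} ≥ ν. Then limsup_{j→∞} f_{s,X^{(j)}}(a^{(j)})/g^{(j)} ≤ φ_{s,ν}(α). -/
open Filter Finset
open scoped Classical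

noncomputable section

/-- Abstract interface for a smooth projective geometrically irreducible curve over `K`,
bundling its closed points (with their degrees), its genus, its function field,
Riemann-Roch spaces of (K-rational) divisors, residue fields at closed points,
uniformizers and evaluation maps. Divisors are modelled as finitely supported
functions from closed points to `ℤ`. -/
structure Curve (K : Type) [Field K] : Type 1 where
  /-- the closed points of the curve -/
  Point : Type
  /-- the degree of a closed point -/
  degPt : Point → ℕ
  degPt_pos : ∀ P, 0 < degPt P
  /-- the genus -/
  genus : ℕ
  /-- the function field K(X) -/
  F : Type
  [fieldF : Field F]
  [algF : Algebra K F]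
  /-- principal divisor of a function (junk value at 0) -/
  divOf : F → (Point →₀ ℤ)
  /-- Riemann-Roch space of a divisor -/
  L : (Point →₀ ℤ) → Submodule K F
  mem_L : ∀ (f : F) (D : Point →₀ ℤ), f ∈ L D ↔ (f ≠ 0 → 0 ≤ divOf f + D)
  /-- a chosen uniformizer at each point -/
  z : Point → F
  /-- evaluation of a function at a rational point (junk value at poles / non-rational points) -/
  eval : Point → F → K
  /-- residue field at a closed point -/
  Res : Point → Type
  [fieldRes : ∀ P, Field (Res P)]
  [algRes : ∀ P, Algebra K (Res P)]
  finrank_Res : ∀ P, Module.finrank K (Res P) = degPt P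
  /-- evaluation of a function at a closed point (junk value at poles) -/
  evalRes : (P : Point) → F → Res P

attribute [instance] Curve.fieldF Curve.algF Curve.fieldRes Curve.algRes

namespace Curve

variable {K : Type} [Field K] (X : Curve K)

/-- the degree of a divisor -/
def deg (D : X.Point →₀ ℤ) : ℤ := D.sum fun P n => n * (X.degPt P : ℤ)

/-- a closed point, viewed as a divisor -/
def pt (P : X.Point) : X.Point →₀ ℤ := Finsupp.single P 1

/-- `l(D)`, the dimension of the Riemann-Roch space of `D` -/
def l (D : X.Point →₀ ℤ) : ℕ := Module.finrank K (X.L D)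

/-- the number of `K`-rational points of `X`, i.e. of closed points of degree 1 -/
def numPts : ℕ := Nat.card {P : X.Point // X.degPt P = 1}

/-- a divisor is ordinary if `l(D) = max (0, deg D + 1 - g)` -/
def Ordinary (D : X.Point →₀ ℤ) : Prop := (X.l D : ℤ) = max 0 (X.deg D + 1 - (X.genus : ℤ))

/-- `E` is the base locus of a subspace `V ⊆ L(B)`: the largest divisor `E` with
`V ⊆ L(B - E)`. -/
def IsBaseLocus (B : X.Point →₀ ℤ) (V : Submodule K X.F) (E : X.Point →₀ ℤ) : Prop :=
  V ≤ X.L (B - E) ∧ ∀ E' : X.Point →₀ ℤ, V ≤ X.L (B - E') → E' ≤ E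

/-- the generalized evaluation map `ev_{G,D}` at the rational points `P i`
(with the chosen uniformizers) -/
def evG (D : X.Point →₀ ℤ) {n : ℕ} (P : Fin n → X.Point) (f : X.F) : Fin n → K :=
  fun i => X.eval (P i) (X.z (P i) ^ (D (P i)) * f)

/-- the underlying set of the generalized Goppa code `C(G,D)`, where `G` is given by
the rational points `P i` (with the chosen uniformizers): the image of `L(D)` under
the generalized evaluation map. -/
def codeSet (D : X.Point →₀ ℤ) {n : ℕ} (P : Fin n → X.Point) : Set (Fin n → K) :=
  {c | ∃ f ∈ X.L D, c = X.evG D P f}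

end Curve

/-- the function `G_q(n)` -/
def Gq (q : ℕ) (n : ℕ) : ℝ :=
  ∑ k ∈ Finset.Icc 1 (n - 2),
    ((q : ℝ) ^ (n - k) - 1) * ((q : ℝ) ^ (n - k - 1) - 1) /
      (((q : ℝ) ^ n - 1) * ((q : ℝ) ^ (n - 1) - 1))

namespace Curve

variable {K : Type} [Field K] (X : Curve K)

/-- the function `f_{1,X}` -/
def f1 (a : ℤ) : ℤ :=
  if a = -1 then 1
  else if 0 ≤ a ∧ a ≤ (X.genus : ℤ) - 2 then (X.genus : ℤ)
  else 0

/-- the function `f_{2,X}` -/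
def f2 (a : ℤ) : ℤ :=
  if a = (X.genus : ℤ) - 2 then (X.genus : ℤ)
  else if -2 ≤ a ∧ a ≤ (X.genus : ℤ) - 3 then
    if Finite K then
      sInf {m : ℤ | ∃ w : ℕ, 2 ≤ w ∧ (w : ℤ) ≤ (X.genus : ℤ) - 1 - a ∧
        m = ⌊((X.genus : ℝ) - 1 - (a : ℝ) - (w : ℝ)) +
          (1 + ((Nat.card K : ℝ) ^ (w - 2) - 1) / ((Nat.card K : ℝ) ^ w - 1))⁻¹ *
          (2 * (X.genus : ℝ) - 2 + 2 * (a : ℝ) + 4 * (w : ℝ) -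
            2 * Gq (Nat.card K) w * (X.numPts : ℝ))⌋}
    else 3 * (X.genus : ℤ) + 3 + a
  else 0

/-- the function `f_{s,X}` for `s ∈ {1, 2}` -/
def fs (s : ℕ) (a : ℤ) : ℤ := if s = 1 then X.f1 a else X.f2 a

end Curve

/-- the function `φ_{1,ν}` -/
def phi1 (_ν : ℝ) (α : ℝ) : ℝ := if 0 ≤ α ∧ α ≤ 1 then 1 else 0

/-- the function `φ_{2,ν}` (relative to the base field `K`) -/
def phi2 (K : Type) [Field K] (ν α : ℝ) : ℝ :=
  if 0 ≤ α ∧ α < 1 then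
    if Finite K then
      (3 * (Nat.card K : ℝ) ^ 2 + 1) / ((Nat.card K : ℝ) ^ 2 + 1)
        + ((Nat.card K : ℝ) ^ 2 - 1) / ((Nat.card K : ℝ) ^ 2 + 1) * α
        - (2 * (Nat.card K : ℝ) ^ 2 / ((Nat.card K : ℝ) ^ 4 - 1)) * ν
    else 3 + α
  else if α = 1 then 4 else 0

/-- the function `φ_{s,ν}` for `s ∈ {1, 2}` -/
def phis (K : Type) [Field K] (s : ℕ) (ν α : ℝ) : ℝ :=
  if s = 1 then phi1 ν α else phi2 K ν α

/-- a linear code `C ⊆ K^n` is intersecting if the supports of any two nonzero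
codewords intersect -/
def IsIntersecting {K : Type} [Field K] {n : ℕ} (C : Submodule K (Fin n → K)) : Prop :=
  ∀ c ∈ C, c ≠ 0 → ∀ c' ∈ C, c' ≠ 0 → ∃ i, c i * c' i ≠ 0

/-- `μ_K(L)`: the bilinear complexity of the multiplication of the extension `L/K`,
i.e. the smallest length of a multiplication algorithm for `L/K` -/
def muKL (K L : Type) [Field K] [Field L] [Algebra K L] : ℕ :=
  sInf {n : ℕ | ∃ (φ ψ : Fin n → (L →ₗ[K] K)) (w : Fin n → L),
    ∀ x y : L, x * y = ∑ i, (φ i x * ψ i y) • w i}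

/-- `μ_q(k) = μ_{F_q}(F_{q^k})`: the bilinear complexity of multiplication in the
degree-`k` extension of `K = F_q` -/
def muq (K : Type) [Field K] (k : ℕ) : ℕ :=
  sInf {n : ℕ | ∃ (L : Type) (_ : Field L) (_ : Algebra K L),
    Module.finrank K L = k ∧
      ∃ (φ ψ : Fin n → (L →ₗ[K] K)) (w : Fin n → L),
        ∀ x y : L, x * y = ∑ i, (φ i x * ψ i y) • w i}

/-- `m_q = liminf_k μ_q(k)/k` -/
def mq (K : Type) [Field K] : ℝ := liminf (fun k : ℕ => (muq K k : ℝ) / k) atTop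

/-- `M_q = limsup_k μ_q(k)/k` -/
def Mq (K : Type) [Field K] : ℝ := limsup (fun k : ℕ => (muq K k : ℝ) / k) atTop

/-- the Ihara constant `A(q)`: the largest real number which is the limit of
`|X^{(j)}(F_q)| / g^{(j)}` along a sequence of curves over `F_q` whose genus tends
to infinity -/
def IharaA (K : Type) [Field K] : ℝ :=
  sSup {A : ℝ | ∃ X : ℕ → Curve K,
    Tendsto (fun j => ((X j).genus : ℝ)) atTop atTop ∧
    Tendsto (fun j => ((X j).numPts : ℝ) / ((X j).genus : ℝ)) atTop (nhds A)}

/-- the constant `A'(q)`: as `A(q)`, with the extra requirement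
`g^{(j+1)}/g^{(j)} → 1` -/
def IharaA' (K : Type) [Field K] : ℝ :=
  sSup {A : ℝ | ∃ X : ℕ → Curve K,
    Tendsto (fun j => ((X j).genus : ℝ)) atTop atTop ∧
    Tendsto (fun j => ((X j).numPts : ℝ) / ((X j).genus : ℝ)) atTop (nhds A) ∧
    Tendsto (fun j => ((X (j + 1)).genus : ℝ) / ((X j).genus : ℝ)) atTop (nhds 1)}

/-- `R_q`: the maximal asymptotic rate of linear intersecting codes over `F_q` -/
def maxRate (K : Type) [Field K] : ℝ :=
  limsup (fun n : ℕ =>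
    sSup {r : ℝ | ∃ C : Submodule K (Fin n → K),
      IsIntersecting C ∧ r = (Module.finrank K C : ℝ) / n}) atTop

end

/-!
Outside `[0, 1]` the integers `a⁽ʲ⁾` eventually leave the range where `f_{s,X}` can be nonzero.
For `s = 1` one has `0 ≤ f_{1,X} ≤ g`, and for `s = 2` over an infinite field
`f_{2,X}(a)/g = (3g + 3 + a)/g → 3 + α`. Over `K = F_q`, every fixed `w ≥ 2` is eventually
admissible in the minimum defining `f_{2,X}(a)`, so
`f_{2,X}(a)/g ≤ (1 - α) + c_w (2 + 2α) - 2 c_w G_q(w) |X(F_q)|/g + o(1)`, where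
`c_w = (1 + (q^{w-2} - 1)/(q^w - 1))⁻¹`. Letting `w → ∞`, `c_w → q²/(q² + 1)` and, by
dominated convergence, `G_q(w) → 1/(q² - 1)`; this limit is `φ_{2,ν}(α)`.
-/

open Topology

section Asymptotics

variable {ι : Type*} {l : Filter ι} {x g : ι → ℝ} {α β : ℝ}

theorem eventually_add_lt_mul_of_tendsto_div (hg : Tendsto g l atTop)
    (hx : Tendsto (fun j => x j / g j) l (𝓝 α)) (hαβ : α < β) (C : ℝ) :
    ∀ᶠ j in l, x j + C < β * g j := by
  obtain ⟨β', hαβ', hβ'β⟩ := exists_between hαβ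
  filter_upwards [hx.eventually_lt_const hαβ', hg.eventually_gt_atTop 0,
    (hg.const_mul_atTop (sub_pos.2 hβ'β)).eventually_gt_atTop C] with j hxj hgj hCj
  rw [div_lt_iff₀ hgj] at hxj
  linarith

theorem eventually_mul_add_lt_of_tendsto_div (hg : Tendsto g l atTop)
    (hx : Tendsto (fun j => x j / g j) l (𝓝 α)) (hβα : β < α) (C : ℝ) :
    ∀ᶠ j in l, β * g j + C < x j := by
  have hx' : Tendsto (fun j => -x j / g j) l (𝓝 (-α)) := by
    simpa only [neg_div] using hx.neg
  filter_upwards [eventually_add_lt_mul_of_tendsto_div hg hx' (neg_lt_neg hβα) C] with j hj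
  linarith [neg_mul β (g j)]

end Asymptotics

section LimsupBounds

variable {ι : Type*} {l : Filter ι} {u v r : ι → ℝ}

theorem eventually_lt_of_le_sub_mul {V κ ν b : ℝ} (hκ : 0 ≤ κ) (hv : Tendsto v l (𝓝 V))
    (hr : IsBoundedUnder (· ≥ ·) l r) (hν : ν ≤ liminf r l)
    (hu : ∀ᶠ j in l, u j ≤ v j - κ * r j) (hb : V - κ * ν < b) :
    ∀ᶠ j in l, u j < b := by
  have hcont : Tendsto (fun t => V - κ * t) (𝓝 ν) (𝓝 (V - κ * ν)) :=
    tendsto_const_nhds.sub (tendsto_id.const_mul κ)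
  obtain ⟨ν', hν'ν, hν'b⟩ := (hcont.eventually_lt_const hb).exists_lt
  filter_upwards [hu, hv.eventually_lt_const (show V < b + κ * ν' by linarith),
    eventually_lt_of_lt_liminf (hν'ν.trans_le hν) hr] with j huj hvj hrj
  nlinarith [mul_le_mul_of_nonneg_left hrj.le hκ]

theorem tendsto_atBot_of_not_isCoboundedUnder (h : ¬IsCoboundedUnder (· ≤ ·) l u) :
    Tendsto u l atBot := by
  refine tendsto_atBot.2 fun b => ?_
  simp only [IsCoboundedUnder, IsCobounded, eventually_map, not_exists, not_forall] at h
  obtain ⟨a, hua, hab⟩ := h b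
  exact hua.mono fun j hj => hj.trans (not_le.1 hab).le

-- In `ℝ`, `limsup u l` is the junk value `0` when `u → -∞`; hence `hbot`.
theorem limsup_le_of_forall_gt_eventually_lt {Φ : ℝ} (h : ∀ b > Φ, ∀ᶠ j in l, u j < b)
    (hbot : Tendsto u l atBot → 0 ≤ Φ) : limsup u l ≤ Φ := by
  by_cases hcob : IsCoboundedUnder (· ≤ ·) l u
  · exact le_of_forall_gt_imp_ge_of_dense fun b hb =>
      limsup_le_of_le hcob ((h b hb).mono fun _ => le_of_lt)
  · rw [Real.limsup_of_not_isCoboundedUnder hcob]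
    exact hbot (tendsto_atBot_of_not_isCoboundedUnder hcob)

theorem liminf_eq_zero_of_tendsto_atTop (h : Tendsto u l atTop) : liminf u l = 0 := by
  refine Real.liminf_of_not_isCoboundedUnder fun ⟨b, hb⟩ => ?_
  have := hb (b + 1) (h.eventually_ge_atTop (b + 1))
  linarith

end LimsupBounds

theorem sub_one_div_sub_one_le_div {a b : ℝ} (hab : a ≤ b) (hb : 1 < b) :
    (a - 1) / (b - 1) ≤ a / b := by
  rw [div_le_div_iff₀ (by linarith) (by linarith)]
  nlinarith

noncomputable def powRatio (q : ℝ) (n k : ℕ) : ℝ := (q ^ (n - k) - 1) / (q ^ n - 1)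

section PowRatio

variable {q : ℝ} {n k : ℕ}

theorem powRatio_nonneg (hq : 1 ≤ q) : 0 ≤ powRatio q n k :=
  div_nonneg (sub_nonneg.2 (one_le_pow₀ hq)) (sub_nonneg.2 (one_le_pow₀ hq))

theorem pow_sub_div_pow (hq : q ≠ 0) (hkn : k ≤ n) : q ^ (n - k) / q ^ n = q⁻¹ ^ k := by
  rw [pow_sub₀ _ hq hkn, inv_pow, mul_div_right_comm, div_self (pow_ne_zero _ hq), one_mul]

theorem powRatio_le (hq : 1 < q) (hkn : k ≤ n) (hn : n ≠ 0) : powRatio q n k ≤ q⁻¹ ^ k :=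
  (sub_one_div_sub_one_le_div (pow_le_pow_right₀ hq.le (Nat.sub_le n k))
    (one_lt_pow₀ hq hn)).trans_eq (pow_sub_div_pow (by positivity) hkn)

theorem inv_pow_sub_inv_pow_le_powRatio (hq : 1 < q) (hkn : k ≤ n) (hn : n ≠ 0) :
    q⁻¹ ^ k - q⁻¹ ^ n ≤ powRatio q n k :=
  calc q⁻¹ ^ k - q⁻¹ ^ n = (q ^ (n - k) - 1) / q ^ n := by
        rw [sub_div, pow_sub_div_pow (by positivity) hkn, one_div, ← inv_pow]
    _ ≤ powRatio q n k :=
        div_le_div_of_nonneg_left (sub_nonneg.2 (one_le_pow₀ hq.le))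
          (sub_pos.2 (one_lt_pow₀ hq hn)) (sub_le_self _ zero_le_one)

theorem tendsto_powRatio (hq : 1 < q) (k : ℕ) :
    Tendsto (fun n => powRatio q n k) atTop (𝓝 (q⁻¹ ^ k)) := by
  have hpow : Tendsto (fun n : ℕ => q⁻¹ ^ n) atTop (𝓝 0) :=
    tendsto_pow_atTop_nhds_zero_of_lt_one (by positivity) (inv_lt_one_of_one_lt₀ hq)
  have hlow := hpow.const_sub (q⁻¹ ^ k)
  rw [sub_zero] at hlow
  refine tendsto_of_tendsto_of_tendsto_of_le_of_le' hlow tendsto_const_nhds ?_ ?_ <;>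
  filter_upwards [eventually_ge_atTop (k + 1)] with n hn
  exacts [inv_pow_sub_inv_pow_le_powRatio hq (by omega) (by omega),
    powRatio_le hq (by omega) (by omega)]

end PowRatio

section Gq

variable {q : ℕ}

theorem Gq_eq_sum_range (n : ℕ) :
    Gq q n = ∑ k ∈ range (n - 2), powRatio q n (k + 1) * powRatio q (n - 1) (k + 1) := by
  rw [Gq, ← Finset.Ico_add_one_right_eq_Icc, Finset.sum_Ico_eq_sum_range, Nat.add_sub_cancel]
  refine Finset.sum_congr rfl fun k _ => ?_
  rw [powRatio, powRatio, Nat.sub_right_comm n 1, add_comm 1 k, mul_div_mul_comm]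

theorem Gq_term_le (hq : 1 < q) {n k : ℕ} (hk : k < n - 2) :
    powRatio q n (k + 1) * powRatio q (n - 1) (k + 1) ≤ (((q : ℝ) ^ 2)⁻¹) ^ (k + 1) := by
  have hq' : (1 : ℝ) < q := Nat.one_lt_cast.2 hq
  calc powRatio q n (k + 1) * powRatio q (n - 1) (k + 1)
      ≤ (q : ℝ)⁻¹ ^ (k + 1) * (q : ℝ)⁻¹ ^ (k + 1) :=
        mul_le_mul (powRatio_le hq' (by omega) (by omega)) (powRatio_le hq' (by omega) (by omega))
          (powRatio_nonneg hq'.le) (by positivity)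
    _ = (((q : ℝ) ^ 2)⁻¹) ^ (k + 1) := by rw [← mul_pow, ← mul_inv, ← sq]

theorem hasSum_inv_sq_pow_succ (hq : 1 < q) :
    HasSum (fun k : ℕ => (((q : ℝ) ^ 2)⁻¹) ^ (k + 1)) (((q : ℝ) ^ 2 - 1)⁻¹) := by
  have hq' : (1 : ℝ) < (q : ℝ) ^ 2 := one_lt_pow₀ (Nat.one_lt_cast.2 hq) two_ne_zero
  have hval :
      ((q : ℝ) ^ 2)⁻¹ * (1 - ((q : ℝ) ^ 2)⁻¹)⁻¹ = ((q : ℝ) ^ 2 - 1)⁻¹ := by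
    rw [← mul_inv, mul_sub, mul_one, mul_inv_cancel₀ (by positivity)]
  have h := (hasSum_geometric_of_lt_one (by positivity) (inv_lt_one_of_one_lt₀ hq')).mul_left
    ((q : ℝ) ^ 2)⁻¹
  rwa [← funext fun k => pow_succ' (((q : ℝ) ^ 2)⁻¹) k, hval] at h

theorem Gq_nonneg (hq : 1 ≤ q) (n : ℕ) : 0 ≤ Gq q n := by
  rw [Gq_eq_sum_range]
  exact Finset.sum_nonneg fun k _ =>
    mul_nonneg (powRatio_nonneg (Nat.one_le_cast.2 hq)) (powRatio_nonneg (Nat.one_le_cast.2 hq))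

theorem Gq_le (hq : 1 < q) (n : ℕ) : Gq q n ≤ ((q : ℝ) ^ 2 - 1)⁻¹ := by
  rw [Gq_eq_sum_range, ← (hasSum_inv_sq_pow_succ hq).tsum_eq]
  refine (Finset.sum_le_sum fun k hk => Gq_term_le hq (Finset.mem_range.1 hk)).trans ?_
  exact (hasSum_inv_sq_pow_succ hq).summable.sum_le_tsum _ fun k _ => by positivity

theorem tendsto_Gq (hq : 1 < q) : Tendsto (Gq q) atTop (𝓝 (((q : ℝ) ^ 2 - 1)⁻¹)) := by
  have hq' : (1 : ℝ) < q := Nat.one_lt_cast.2 hq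
  let F : ℕ → ℕ → ℝ := fun n k =>
    if k < n - 2 then powRatio q n (k + 1) * powRatio q (n - 1) (k + 1) else 0
  have hF : Gq q = fun n => ∑' k, F n k := funext fun n => by
    rw [tsum_eq_sum (s := range (n - 2)) fun k hk => if_neg (by simpa using hk), Gq_eq_sum_range]
    exact Finset.sum_congr rfl fun k hk => (if_pos (Finset.mem_range.1 hk)).symm
  rw [hF, ← (hasSum_inv_sq_pow_succ hq).tsum_eq]
  refine tendsto_tsum_of_dominated_convergence (hasSum_inv_sq_pow_succ hq).summable (fun k => ?_) ?_
  · have hlim := (tendsto_powRatio hq' (k + 1)).mul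
      ((tendsto_powRatio hq' (k + 1)).comp (tendsto_sub_atTop_nat 1))
    rw [← mul_pow, ← mul_inv, ← sq] at hlim
    refine hlim.congr' ?_
    filter_upwards [eventually_gt_atTop (k + 2)] with n hn
    exact (if_pos (by omega)).symm
  · refine Eventually.of_forall fun n k => ?_
    simp only [F]
    split_ifs with hk
    · rw [Real.norm_of_nonneg (mul_nonneg (powRatio_nonneg hq'.le) (powRatio_nonneg hq'.le))]
      exact Gq_term_le hq hk
    · simp only [norm_zero]
      positivity

end Gq

namespace Curve

variable {K : Type} [Field K] (X : Curve K) {a : ℤ}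

@[simp] theorem fs_one : X.fs 1 a = X.f1 a := if_pos rfl

@[simp] theorem fs_two : X.fs 2 a = X.f2 a := if_neg (by norm_num)

theorem fs_eq_zero {s : ℕ} (hs : s = 1 ∨ s = 2) (ha : a < -2 ∨ (X.genus : ℤ) < a) :
    X.fs s a = 0 := by
  rcases hs with rfl | rfl <;> simp only [fs_one, fs_two, f1, f2] <;> split_ifs <;>
    first | rfl | (exfalso; omega)

theorem f1_nonneg (a : ℤ) : 0 ≤ X.f1 a := by
  unfold f1; split_ifs <;> omega

theorem f1_le_genus (hg : 1 ≤ X.genus) (a : ℤ) : X.f1 a ≤ X.genus := by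
  unfold f1; split_ifs <;> omega

theorem f2_of_not_finite (hK : ¬Finite K) (h1 : -2 ≤ a) (h2 : a ≤ (X.genus : ℤ) - 3) :
    X.f2 a = 3 * (X.genus : ℤ) + 3 + a := by
  rw [f2, if_neg (by omega), if_pos ⟨h1, h2⟩, if_neg hK]

noncomputable def f2Bound (a : ℤ) (w : ℕ) : ℝ :=
  ((X.genus : ℝ) - 1 - a - w) + (1 + powRatio (Nat.card K) w 2)⁻¹ *
    (2 * (X.genus : ℝ) - 2 + 2 * a + 4 * w - 2 * Gq (Nat.card K) w * X.numPts)

theorem f2_eq_sInf [Finite K] (h1 : -2 ≤ a) (h2 : a ≤ (X.genus : ℤ) - 3) :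
    X.f2 a = sInf {m : ℤ | ∃ w : ℕ, 2 ≤ w ∧ (w : ℤ) ≤ (X.genus : ℤ) - 1 - a ∧
      m = ⌊X.f2Bound a w⌋} := by
  rw [f2, if_neg (by omega), if_pos ⟨h1, h2⟩, if_pos ‹Finite K›]
  rfl

theorem neg_numPts_le_f2Bound [Finite K] (ha : -2 ≤ a) {w : ℕ} (hw : 2 ≤ w)
    (hwa : (w : ℤ) ≤ (X.genus : ℤ) - 1 - a) : -(X.numPts : ℝ) ≤ X.f2Bound a w := by
  have hq : 1 < Nat.card K := Finite.one_lt_card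
  have hq' : (2 : ℝ) ≤ Nat.card K := by exact_mod_cast hq
  have hc0 : 0 < (1 + powRatio (Nat.card K) w 2)⁻¹ := by
    have := powRatio_nonneg (q := Nat.card K) (n := w) (k := 2) (by linarith)
    positivity
  have hc1 : (1 + powRatio (Nat.card K) w 2)⁻¹ ≤ 1 :=
    inv_le_one_of_one_le₀ (le_add_of_nonneg_right (powRatio_nonneg (by linarith)))
  have hG0 := Gq_nonneg hq.le w
  have hG : Gq (Nat.card K) w ≤ 1 / 2 := by
    refine (Gq_le hq w).trans ?_
    rw [inv_le_comm₀ (by nlinarith) (by norm_num)]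
    nlinarith
  have hwa' : (w : ℝ) ≤ X.genus - 1 - a := by exact_mod_cast hwa
  have ha' : (-2 : ℝ) ≤ a := by exact_mod_cast ha
  have hw' : (2 : ℝ) ≤ w := by exact_mod_cast hw
  have hN : (0 : ℝ) ≤ X.numPts := Nat.cast_nonneg _
  have hP : (0 : ℝ) ≤ 2 * X.genus - 2 + 2 * a + 4 * w := by linarith
  -- all terms of `f2Bound` are nonnegative except `-2 c G N`, and `2 c G ≤ 1`
  unfold f2Bound
  nlinarith [mul_le_mul_of_nonneg_left hG hN, mul_nonneg hG0 hN,
    mul_le_mul_of_nonneg_right hc1 (mul_nonneg hG0 hN), mul_le_mul_of_nonneg_left hP hc0.le]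

theorem neg_numPts_mem_lowerBounds [Finite K] (ha : -2 ≤ a) :
    -(X.numPts : ℤ) ∈ lowerBounds {m : ℤ | ∃ w : ℕ, 2 ≤ w ∧
      (w : ℤ) ≤ (X.genus : ℤ) - 1 - a ∧ m = ⌊X.f2Bound a w⌋} := by
  rintro _ ⟨w, hw, hwa, rfl⟩
  exact Int.le_floor.2 (by exact_mod_cast X.neg_numPts_le_f2Bound ha hw hwa)

theorem neg_numPts_le_f2 [Finite K] (a : ℤ) : -(X.numPts : ℤ) ≤ X.f2 a := by
  by_cases h : -2 ≤ a ∧ a ≤ (X.genus : ℤ) - 3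
  · rw [X.f2_eq_sInf h.1 h.2]
    exact le_csInf ⟨_, 2, le_rfl, by omega, rfl⟩ (X.neg_numPts_mem_lowerBounds h.1)
  · unfold f2
    split_ifs <;> omega

theorem f2_le_f2Bound [Finite K] (ha : -2 ≤ a) {w : ℕ} (hw : 2 ≤ w)
    (hwa : (w : ℤ) ≤ (X.genus : ℤ) - 1 - a) : (X.f2 a : ℝ) ≤ X.f2Bound a w := by
  rw [X.f2_eq_sInf ha (by omega)]
  have hle := csInf_le ⟨_, X.neg_numPts_mem_lowerBounds ha⟩ ⟨w, hw, hwa, rfl⟩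
  exact (Int.cast_le.2 hle).trans (Int.floor_le _)

theorem f2_div_genus_le [Finite K] (ha : -2 ≤ a) {w : ℕ} (hw : 2 ≤ w)
    (hwa : (w : ℤ) ≤ (X.genus : ℤ) - 1 - a) :
    (X.f2 a : ℝ) / X.genus ≤
      (1 - a / X.genus - (w + 1) * (X.genus : ℝ)⁻¹) + (1 + powRatio (Nat.card K) w 2)⁻¹ *
        (2 + 2 * (a / X.genus) + (4 * w - 2) * (X.genus : ℝ)⁻¹) -
      2 * (1 + powRatio (Nat.card K) w 2)⁻¹ * Gq (Nat.card K) w * (X.numPts / X.genus) := by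
  have hg : (0 : ℝ) < X.genus := by exact_mod_cast (show (0 : ℤ) < X.genus by omega)
  calc (X.f2 a : ℝ) / X.genus ≤ X.f2Bound a w / X.genus :=
        div_le_div_of_nonneg_right (X.f2_le_f2Bound ha hw hwa) hg.le
    _ = _ := by
        unfold f2Bound
        field_simp
        ring

end Curve

section Phi

variable {K : Type} [Field K] {ν α : ℝ}

@[simp] theorem phis_one : phis K 1 ν α = phi1 ν α := if_pos rfl

@[simp] theorem phis_two : phis K 2 ν α = phi2 K ν α := if_neg (by norm_num)

theorem phis_eq_zero {s : ℕ} (hs : s = 1 ∨ s = 2) (hα : α < 0 ∨ 1 < α) :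
    phis K s ν α = 0 := by
  rcases hs with rfl | rfl <;> simp only [phis_one, phis_two, phi1, phi2] <;> split_ifs <;>
    first | rfl | (exfalso; rcases hα with hα | hα <;> linarith)

theorem phi1_of_mem_Icc (h0 : 0 ≤ α) (h1 : α ≤ 1) : phi1 ν α = 1 := if_pos ⟨h0, h1⟩

theorem phi2_of_not_finite (hK : ¬Finite K) (h0 : 0 ≤ α) (h1 : α < 1) :
    phi2 K ν α = 3 + α := by
  rw [phi2, if_pos ⟨h0, h1⟩, if_neg hK]

theorem phi2_of_finite [Finite K] (h0 : 0 ≤ α) (h1 : α < 1) :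
    phi2 K ν α = (1 - α) + (1 + (Nat.card K : ℝ)⁻¹ ^ 2)⁻¹ * (2 + 2 * α) -
      2 * (1 + (Nat.card K : ℝ)⁻¹ ^ 2)⁻¹ * ((Nat.card K : ℝ) ^ 2 - 1)⁻¹ * ν := by
  rw [phi2, if_pos ⟨h0, h1⟩, if_pos ‹Finite K›]
  have hq : (2 : ℝ) ≤ Nat.card K := by exact_mod_cast Finite.one_lt_card
  have h2 : (Nat.card K : ℝ) ^ 2 - 1 ≠ 0 := by nlinarith
  have h4 : (Nat.card K : ℝ) ^ 4 - 1 ≠ 0 := by nlinarith [pow_le_pow_left₀ (by norm_num) hq 4]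
  field_simp
  ring

end Phi

section IntegerSequences

variable {ι : Type*} {l : Filter ι} {g : ι → ℕ} {a : ι → ℤ} {α : ℝ}

theorem eventually_le_and_add_le_of_tendsto_div (hg : Tendsto (fun j => (g j : ℝ)) l atTop)
    (ha : Tendsto (fun j => (a j : ℝ) / g j) l (𝓝 α)) (h0 : 0 < α) (h1 : α < 1) (C : ℤ) :
    ∀ᶠ j in l, C ≤ a j ∧ a j + C ≤ g j := by
  filter_upwards [eventually_mul_add_lt_of_tendsto_div hg ha h0 C,
    eventually_add_lt_mul_of_tendsto_div hg ha h1 C] with j hlow hupp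
  rw [zero_mul, zero_add] at hlow
  rw [one_mul] at hupp
  exact ⟨by exact_mod_cast hlow.le, by exact_mod_cast hupp.le⟩

theorem eventually_lt_or_lt_of_tendsto_div (hg : Tendsto (fun j => (g j : ℝ)) l atTop)
    (ha : Tendsto (fun j => (a j : ℝ) / g j) l (𝓝 α)) (hα : α < 0 ∨ 1 < α) (C : ℤ) :
    ∀ᶠ j in l, a j + C < 0 ∨ (g j : ℤ) + C < a j := by
  rcases hα with hα | hα
  · filter_upwards [eventually_add_lt_mul_of_tendsto_div hg ha hα C] with j hj
    rw [zero_mul] at hj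
    exact Or.inl (by exact_mod_cast hj)
  · filter_upwards [eventually_mul_add_lt_of_tendsto_div hg ha hα C] with j hj
    rw [one_mul] at hj
    exact Or.inr (by exact_mod_cast hj)

end IntegerSequences

section CurveSequences

variable {K : Type} [Field K] {X : ℕ → Curve K} {a : ℕ → ℤ} {α ν : ℝ}

theorem limsup_f1_div_genus_le_one (hg : Tendsto (fun j => ((X j).genus : ℝ)) atTop atTop) :
    limsup (fun j => ((X j).f1 (a j) : ℝ) / (X j).genus) atTop ≤ 1 := by
  refine limsup_le_of_le (isCoboundedUnder_le_of_le atTop fun j =>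
    div_nonneg (Int.cast_nonneg ((X j).f1_nonneg _)) (Nat.cast_nonneg _)) ?_
  filter_upwards [hg.eventually_ge_atTop 1] with j hj
  rw [div_le_one (by linarith)]
  exact_mod_cast (X j).f1_le_genus (by exact_mod_cast hj) _

theorem tendsto_f2_div_genus_of_not_finite (hK : ¬Finite K)
    (hg : Tendsto (fun j => ((X j).genus : ℝ)) atTop atTop)
    (ha : Tendsto (fun j => (a j : ℝ) / (X j).genus) atTop (𝓝 α))
    (h0 : 0 < α) (h1 : α < 1) :
    Tendsto (fun j => ((X j).f2 (a j) : ℝ) / (X j).genus) atTop (𝓝 (3 + α)) := by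
  have hlim := ((tendsto_const_nhds (x := (3 : ℝ))).add (hg.inv_tendsto_atTop.const_mul 3)).add ha
  rw [mul_zero, add_zero] at hlim
  refine hlim.congr' ?_
  filter_upwards [eventually_le_and_add_le_of_tendsto_div hg ha h0 h1 3,
    hg.eventually_gt_atTop 0] with j ⟨hlow, hupp⟩ hj
  rw [(X j).f2_of_not_finite hK (by omega) (by omega)]
  push_cast
  simp only [Pi.inv_apply]
  field_simp

theorem limsup_f2_div_genus_le [Finite K] (hg : Tendsto (fun j => ((X j).genus : ℝ)) atTop atTop)
    (ha : Tendsto (fun j => (a j : ℝ) / (X j).genus) atTop (𝓝 α))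
    (hN : ν ≤ liminf (fun j => ((X j).numPts : ℝ) / (X j).genus) atTop)
    (h0 : 0 < α) (h1 : α < 1) :
    limsup (fun j => ((X j).f2 (a j) : ℝ) / (X j).genus) atTop ≤
      (1 - α) + (1 + (Nat.card K : ℝ)⁻¹ ^ 2)⁻¹ * (2 + 2 * α) -
        2 * (1 + (Nat.card K : ℝ)⁻¹ ^ 2)⁻¹ * ((Nat.card K : ℝ) ^ 2 - 1)⁻¹ * ν := by
  have hq : 1 < Nat.card K := Finite.one_lt_card
  have hq' : (1 : ℝ) < Nat.card K := Nat.one_lt_cast.2 hq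
  set c : ℕ → ℝ := fun w => (1 + powRatio (Nat.card K) w 2)⁻¹
  have hc0 : ∀ w, 0 ≤ c w := fun w =>
    inv_nonneg.2 (by linarith [powRatio_nonneg (n := w) (k := 2) hq'.le])
  have hc : Tendsto c atTop (𝓝 (1 + (Nat.card K : ℝ)⁻¹ ^ 2)⁻¹) :=
    (tendsto_const_nhds.add (tendsto_powRatio hq' 2)).inv₀ (by positivity)
  have hΦ := ((tendsto_const_nhds (x := 1 - α)).add (hc.mul_const (2 + 2 * α))).sub
    (((hc.const_mul 2).mul (tendsto_Gq hq)).mul_const ν)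
  have hr0 : ∀ j, (0 : ℝ) ≤ ((X j).numPts : ℝ) / (X j).genus := fun j => by positivity
  have hinv := hg.inv_tendsto_atTop
  refine limsup_le_of_forall_gt_eventually_lt (fun b hb => ?_) fun hbot => ?_
  · obtain ⟨w, hwb, hw⟩ := ((hΦ.eventually_lt_const hb).and (eventually_ge_atTop 2)).exists
    have hfirst := ((tendsto_const_nhds (x := (1 : ℝ))).sub ha).sub
      (hinv.const_mul ((w : ℝ) + 1))
    have hsecond := ((tendsto_const_nhds (x := (2 : ℝ))).add (ha.const_mul 2)).add
      (hinv.const_mul (4 * (w : ℝ) - 2))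
    have hv := hfirst.add (hsecond.const_mul (c w))
    simp only [mul_zero, sub_zero, add_zero] at hv
    have hκ := mul_nonneg (mul_nonneg zero_le_two (hc0 w)) (Gq_nonneg hq.le w)
    refine eventually_lt_of_le_sub_mul hκ hv
      (isBoundedUnder_of_eventually_ge (Eventually.of_forall hr0)) hN ?_ hwb
    filter_upwards [eventually_le_and_add_le_of_tendsto_div hg ha h0 h1 (w + 1)]
      with j ⟨hlow, hupp⟩
    exact (X j).f2_div_genus_le (by omega) hw (by omega)
  · have hlower (j : ℕ) :
        -(((X j).numPts : ℝ) / (X j).genus) ≤ ((X j).f2 (a j) : ℝ) / (X j).genus := by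
      rw [← neg_div]
      exact div_le_div_of_nonneg_right (by exact_mod_cast (X j).neg_numPts_le_f2 (a j))
        (Nat.cast_nonneg _)
    have hr := tendsto_neg_atBot_iff.1 (tendsto_atBot_mono hlower hbot)
    have hν : ν ≤ 0 := hN.trans_eq (liminf_eq_zero_of_tendsto_atTop hr)
    have hG : (0 : ℝ) ≤ ((Nat.card K : ℝ) ^ 2 - 1)⁻¹ := inv_nonneg.2 (by nlinarith)
    have hC : (0 : ℝ) ≤ (1 + (Nat.card K : ℝ)⁻¹ ^ 2)⁻¹ := by positivity
    linarith [mul_nonpos_of_nonneg_of_nonpos (mul_nonneg (mul_nonneg zero_le_two hC) hG) hν,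
      mul_nonneg hC (show (0 : ℝ) ≤ 2 + 2 * α by linarith)]

end CurveSequences

theorem statement_9_general {K : Type} [Field K]
    (s : ℕ) (hs : s = 1 ∨ s = 2)
    (α ν : ℝ) (hα0 : α ≠ 0) (hα1 : α ≠ 1)
    (X : ℕ → Curve K) (a : ℕ → ℤ)
    (hg : Tendsto (fun j => ((X j).genus : ℝ)) atTop atTop)
    (ha : Tendsto (fun j => (a j : ℝ) / ((X j).genus : ℝ)) atTop (nhds α))
    (hN : ν ≤ liminf (fun j => ((X j).numPts : ℝ) / ((X j).genus : ℝ)) atTop) :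
    limsup (fun j => ((X j).fs s (a j) : ℝ) / ((X j).genus : ℝ)) atTop ≤
      phis K s ν α := by
  by_cases hout : α < 0 ∨ 1 < α
  · have hzero : (fun j => ((X j).fs s (a j) : ℝ) / (X j).genus) =ᶠ[atTop] fun _ => 0 := by
      filter_upwards [eventually_lt_or_lt_of_tendsto_div hg ha hout 2] with j hj
      rw [(X j).fs_eq_zero hs (by omega), Int.cast_zero, zero_div]
    rw [phis_eq_zero hs hout, limsup_congr hzero, limsup_const]
  simp only [not_or, not_lt] at hout
  have h0 : 0 < α := lt_of_le_of_ne hout.1 (Ne.symm hα0)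
  have h1 : α < 1 := lt_of_le_of_ne hout.2 hα1
  rcases hs with rfl | rfl
  · simpa only [Curve.fs_one, phis_one, phi1_of_mem_Icc h0.le h1.le] using
      limsup_f1_div_genus_le_one hg
  · simp only [Curve.fs_two, phis_two]
    by_cases hK : Finite K
    · rw [phi2_of_finite h0.le h1]
      exact limsup_f2_div_genus_le hg ha hN h0 h1
    · rw [phi2_of_not_finite hK h0.le h1,
        (tendsto_f2_div_genus_of_not_finite hK hg ha h0 h1).limsup_eq]

/-- Lemma "ptesdiverses" b): for `s ∈ {1,2}` and reals `α ∉ {0,1}`, `ν`, given a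
sequence of curves `X⁽ʲ⁾` of genus `g⁽ʲ⁾ → ∞` with `a⁽ʲ⁾/g⁽ʲ⁾ → α` and
`liminf |X⁽ʲ⁾(K)|/g⁽ʲ⁾ ≥ ν`, one has
`limsup f_{s,X⁽ʲ⁾}(a⁽ʲ⁾)/g⁽ʲ⁾ ≤ φ_{s,ν}(α)`. -/
theorem statement_9 {K : Type} [Field K] [PerfectField K]
    (s : ℕ) (hs : s = 1 ∨ s = 2)
    (α ν : ℝ) (hα0 : α ≠ 0) (hα1 : α ≠ 1)
    (X : ℕ → Curve K) (a : ℕ → ℤ)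
    (hg : Tendsto (fun j => ((X j).genus : ℝ)) atTop atTop)
    (ha : Tendsto (fun j => (a j : ℝ) / ((X j).genus : ℝ)) atTop (nhds α))
    (hN : ν ≤ liminf (fun j => ((X j).numPts : ℝ) / ((X j).genus : ℝ)) atTop) :
    limsup (fun j => ((X j).fs s (a j) : ℝ) / ((X j).genus : ℝ)) atTop ≤
      phis K s ν α :=
  statement_9_general s hs α ν hα0 hα1 X a hg ha hN
end

section
/- Let p be a prime with p ≠ 2. Then for every real number x ≥ 3/2 there exists a positive integer N coprime to p such that x ≤ ψ(N) ≤ 2x, where ψ is Dedekind's psi function; equivalently, the smallest value of ψ on integers coprime to p that is ≥ x is at most 2x. -/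
/-! The numbers `N = 2 ^ (k + 1)` are coprime to every odd prime, and their values
`ψ(N) = 3 · 2 ^ k` double from one to the next, so one of them lies in `[x, 2x]`
as soon as `x ≥ 3/2`. -/

noncomputable section

def dedekindPsi (N : ℕ) : ℝ :=
  (N : ℝ) * ∏ l ∈ N.primeFactors, (1 + 1 / (l : ℝ))

theorem dedekindPsi_prime_pow {q : ℕ} (hq : q.Prime) (k : ℕ) :
    dedekindPsi (q ^ (k + 1)) = (q + 1) * q ^ k := by
  have hq0 : (q : ℝ) ≠ 0 := by exact_mod_cast hq.ne_zero
  rw [dedekindPsi, Nat.primeFactors_prime_pow k.succ_ne_zero hq, Finset.prod_singleton]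
  push_cast
  field_simp
  ring

theorem exists_mul_two_pow_mem_Icc {a x : ℝ} (ha : 0 < a) (hx : a / 2 ≤ x) :
    ∃ k : ℕ, x ≤ a * 2 ^ k ∧ a * 2 ^ k ≤ 2 * x := by
  have h1 : 1 ≤ 2 * x / a := by rw [le_div_iff₀ ha]; linarith
  obtain ⟨k, hle, hlt⟩ := exists_nat_pow_near h1 one_lt_two
  rw [le_div_iff₀ ha] at hle
  rw [div_lt_iff₀ ha, pow_succ] at hlt
  exact ⟨k, by linarith, by linarith⟩

/-- Lemma "psiBertrand": for a prime `p ≠ 2` and every real `x ≥ 3/2` there is a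
positive integer `N` coprime to `p` with `x ≤ ψ(N) ≤ 2x`. -/
theorem statement_19 (p : ℕ) (hp : p.Prime) (hp2 : p ≠ 2)
    (x : ℝ) (hx : 3 / 2 ≤ x) :
    ∃ N : ℕ, 0 < N ∧ N.Coprime p ∧ x ≤ dedekindPsi N ∧ dedekindPsi N ≤ 2 * x := by
  obtain ⟨k, hxk, hkx⟩ := exists_mul_two_pow_mem_Icc (a := 3) three_pos hx
  have hpsi : dedekindPsi (2 ^ (k + 1)) = 3 * 2 ^ k := by
    rw [dedekindPsi_prime_pow Nat.prime_two]
    norm_num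
  have hcop : Nat.Coprime 2 p := (Nat.coprime_primes Nat.prime_two hp).mpr hp2.symm
  exact ⟨2 ^ (k + 1), by positivity, hcop.pow_left _, hpsi ▸ hxk, hpsi ▸ hkx⟩

end
end
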